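/- Assume every hospital's preference is substitutable. Fix a doctor preference profile P and run the doctor-proposing deferred acceptance algorithm (D-DA) at P, producing offer sets O^1, O^2, …. Then for every hospital h ∈ H and every iteration t ≥ 2, the set of offers provisionally accepted by h at iteration t−1 is offered again at iteration t, i.e., C_h(O^{t−1}) ⊆ O^t. -/
import Mathlib


set_option linter.unusedSectionVars false

namespace Matching

open Finset

/-- A many-to-one matching market with contracts: each contract `x` involves exactly one
doctor `xD x` and one hospital `xH x`; each hospital `h` has a fixed antisymmetric,
transitive and complete preference `prH h`, modelled as a linear order on sets of
contracts (only its comparisons between allocations of contracts involving `h` matter). -/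
structure Market (D H X : Type*) where
  xD : X → D
  xH : X → H
  prH : H → LinearOrder (Finset X)

/-- A doctor's preference: an antisymmetric, transitive and complete preference, modelled
as a linear order on sets of contracts (only comparisons between `∅` and singletons of
contracts involving the doctor matter). -/
abbrev Pref (X : Type*) := LinearOrder (Finset X)

/-- A profile of doctors' preferences. -/
abbrev Profile (D X : Type*) := D → Pref X

variable {D H X : Type*}
variable [DecidableEq D] [DecidableEq H] [DecidableEq X] [Fintype D] [Fintype H] [Fintype X]

/-- `Y_d` : the contracts in `Y` involving doctor `d`. -/
def docPart (M : Market D H X) (Y : Finset X) (d : D) : Finset X :=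
  Y.filter fun x => M.xD x = d

/-- `Y_h` : the contracts in `Y` involving hospital `h`. -/
def hospPart (M : Market D H X) (Y : Finset X) (h : H) : Finset X :=
  Y.filter fun x => M.xH x = h

/-- An allocation: distinct contracts involve distinct doctors. -/
def IsAllocation (M : Market D H X) (Z : Finset X) : Prop :=
  ∀ x ∈ Z, ∀ y ∈ Z, M.xD x = M.xD y → x = y

/-- `A(Y)` : the allocations contained in `Y`. -/
def allocs (M : Market D H X) (Y : Finset X) : Finset (Finset X) :=
  Y.powerset.filter fun Z => ∀ x ∈ Z, ∀ y ∈ Z, M.xD x = M.xD y → x = y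

lemma empty_mem_allocs (M : Market D H X) (Y : Finset X) : ∅ ∈ allocs M Y := by
  simp [allocs]

/-- The best allocation contained in `Y` according to the linear order `pr`. -/
def bestAlloc (M : Market D H X) (pr : Pref X) (Y : Finset X) : Finset X :=
  @Finset.max' _ pr (allocs M Y) ⟨∅, empty_mem_allocs M Y⟩

/-- `C_h(Y)` : hospital `h`'s choice set from `Y` (the `≻_h`-maximum of `A(Y_h)`). -/
def Ch (M : Market D H X) (h : H) (Y : Finset X) : Finset X :=
  bestAlloc M (M.prH h) (hospPart M Y h)

/-- `C_d(P_d, Y)` : doctor `d`'s choice set from `Y` (the `P_d`-maximum of `A(Y_d)`). -/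
def Cd (M : Market D H X) (Pd : Pref X) (d : D) (Y : Finset X) : Finset X :=
  bestAlloc M Pd (docPart M Y d)

/-- `C_H(Y) = ∪_{h ∈ H} C_h(Y)`. -/
def CH (M : Market D H X) (Y : Finset X) : Finset X :=
  univ.biUnion fun h => Ch M h Y

/-- `C_D(Y) = ∪_{d ∈ D} C_d(Y)`. -/
def CD (M : Market D H X) (P : Profile D X) (Y : Finset X) : Finset X :=
  univ.biUnion fun d => Cd M (P d) d Y

/-- Substitutability of hospital `h`'s preference: `x ∈ C_h(W)` and `x ∈ Y_h ⊆ W_h`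
imply `x ∈ C_h(Y)`. -/
def Substitutable (M : Market D H X) (h : H) : Prop :=
  ∀ W Y : Finset X, hospPart M Y h ⊆ hospPart M W h →
    ∀ x ∈ hospPart M Y h, x ∈ Ch M h W → x ∈ Ch M h Y

/-- The sets `X^t` of still-available contracts in the doctor-proposing deferred
acceptance algorithm (0-based: index `t` corresponds to iteration `t+1`). -/
def DDAsets (M : Market D H X) (P : Profile D X) : ℕ → Finset X
  | 0 => univ
  | t + 1 =>
      DDAsets M P t \ (CD M P (DDAsets M P t) \ CH M (CD M P (DDAsets M P t)))

/-- `O^t` : the offers made by the doctors at iteration `t` of D-DA (0-based). -/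
def offers (M : Market D H X) (P : Profile D X) (t : ℕ) : Finset X :=
  CD M P (DDAsets M P t)

/-- `O_A^t = ∪_{k ≤ t} O^k` : the accumulated offers up to iteration `t` (0-based). -/
def accOffers (M : Market D H X) (P : Profile D X) (t : ℕ) : Finset X :=
  (Finset.range (t + 1)).biUnion fun k => offers M P k

/-- D-DA has stopped at iteration `t`: all offers are accepted. -/
def DDAstopped (M : Market D H X) (P : Profile D X) (t : ℕ) : Prop :=
  CH M (offers M P t) = offers M P t

/-- The (0-based) last iteration of D-DA, i.e. `T - 1` where `T` is the number of
iterations of D-DA. -/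
noncomputable def DDAlast (M : Market D H X) (P : Profile D X) : ℕ :=
  sInf {t | DDAstopped M P t}

/-- The output of D-DA (the algorithm provably stops by iteration `Fintype.card X`,
and once stopped the offer sets stay constant). -/
def DDAoutput (M : Market D H X) (P : Profile D X) : Finset X :=
  CH M (offers M P (Fintype.card X))

/-- The doctor-optimal rule `φ̄`, giving doctor `d`'s outcome `φ̄_d(P)` (an element of
`A(𝐗_d)`, i.e. `∅` or a singleton). -/
def docOpt (M : Market D H X) (P : Profile D X) (d : D) : Finset X :=
  docPart M (DDAoutput M P) d

/-- The sets `X^t` of still-available contracts in the hospital-proposing deferred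
acceptance algorithm (0-based). -/
def HDAsets (M : Market D H X) (P : Profile D X) : ℕ → Finset X
  | 0 => univ
  | t + 1 =>
      HDAsets M P t \ (CH M (HDAsets M P t) \ CD M P (CH M (HDAsets M P t)))

/-- The offers made by the hospitals at iteration `t` of H-DA (0-based). -/
def hOffers (M : Market D H X) (P : Profile D X) (t : ℕ) : Finset X :=
  CH M (HDAsets M P t)

/-- The output of H-DA. -/
def HDAoutput (M : Market D H X) (P : Profile D X) : Finset X :=
  CD M P (hOffers M P (Fintype.card X))

/-- The hospital-optimal rule `φ̲`, giving doctor `d`'s outcome `φ̲_d(P)`. -/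
def hospOpt (M : Market D H X) (P : Profile D X) (d : D) : Finset X :=
  docPart M (HDAoutput M P) d

/-- The option set `O^φ(P_d)` left open by `P_d` at the rule `φ`. -/
def optionSet (rule : Profile D X → D → Finset X) (d : D) (Pd : Pref X) :
    Set (Finset X) :=
  {S | ∃ P : Profile D X, P d = Pd ∧ S = rule P d}

open scoped Classical in
/-- `W_d(pr, S)` : the `pr`-worst element of the (finite) set `S` of outcomes. -/
noncomputable def worstIn (pr : Pref X) (S : Set (Finset X)) : Finset X :=
  if h : S.Nonempty then
    @Finset.min' _ pr (Set.toFinite S).toFinset ((Set.Finite.toFinset_nonempty _).mpr h)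
  else ∅

open scoped Classical in
/-- The `pr`-best element of the (finite) set `S` of outcomes. -/
noncomputable def bestIn (pr : Pref X) (S : Set (Finset X)) : Finset X :=
  if h : S.Nonempty then
    @Finset.max' _ pr (Set.toFinite S).toFinset ((Set.Finite.toFinset_nonempty _).mpr h)
  else ∅

/-- `P'_d` is a manipulation of the rule at `P_d` : for some subprofile of the other
doctors, reporting `P'_d` gives a strictly `P_d`-better outcome than truth-telling. -/
def IsManip (rule : Profile D X → D → Finset X) (d : D) (Pd P'd : Pref X) : Prop :=
  ∃ P : Profile D X, P d = Pd ∧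
    Pd.lt (rule P d) (rule (Function.update P d P'd) d)

/-- `P'_d` is an obvious manipulation of the rule at `P_d`. -/
def IsObviousManip (rule : Profile D X → D → Finset X) (d : D) (Pd P'd : Pref X) :
    Prop :=
  IsManip rule d Pd P'd ∧
    (Pd.lt (worstIn Pd (optionSet rule d Pd)) (worstIn Pd (optionSet rule d P'd)) ∨
     Pd.lt (bestIn Pd (optionSet rule d Pd)) (bestIn Pd (optionSet rule d P'd)))

/-- A rule is not obviously manipulable (NOM). -/
def NOM (rule : Profile D X → D → Finset X) : Prop :=
  ∀ (d : D) (Pd P'd : Pref X), ¬ IsObviousManip rule d Pd P'd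

/-- A rule is obviously manipulable (OM). -/
def OM (rule : Profile D X → D → Finset X) : Prop :=
  ∃ (d : D) (Pd P'd : Pref X), IsObviousManip rule d Pd P'd

/-- `Y` is a stable allocation at the profile `P` : it is an individually rational
allocation and admits no blocking contract. -/
def IsStable (M : Market D H X) (P : Profile D X) (Y : Finset X) : Prop :=
  IsAllocation M Y ∧ CD M P Y = Y ∧ CH M Y = Y ∧
    ∀ x : X, x ∉ Y →
      ¬ (x ∈ Cd M (P (M.xD x)) (M.xD x) (insert x Y) ∧
         x ∈ Ch M (M.xH x) (insert x Y))

/-- `⌈kq⌉` where `k` is the number of stable allocations at `P`. -/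
noncomputable def quantileIndex (M : Market D H X) (P : Profile D X) (q : ℝ) : ℕ :=
  ⌈(Set.ncard {Y : Finset X | IsStable M P Y} : ℝ) * q⌉₊

/-- `Z` is doctor `d`'s `⌈kq⌉`-th best outcome (according to `P d`) among the `k` stable
allocations at `P` : it is the outcome of some stable allocation, strictly fewer than
`⌈kq⌉` stable allocations give `d` a strictly better outcome, and at least `⌈kq⌉` stable
allocations give `d` a weakly better outcome. -/
def IsQuantileOutcome (M : Market D H X) (P : Profile D X) (q : ℝ) (d : D)
    (Z : Finset X) : Prop :=
  (∃ Y : Finset X, IsStable M P Y ∧ docPart M Y d = Z) ∧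
    Set.ncard {Y : Finset X | IsStable M P Y ∧ (P d).lt Z (docPart M Y d)} <
      quantileIndex M P q ∧
    quantileIndex M P q ≤
      Set.ncard {Y : Finset X | IsStable M P Y ∧ (P d).le Z (docPart M Y d)}

lemma mem_allocs_iff (M : Market D H X) (Y Z : Finset X) :
    Z ∈ allocs M Y ↔ Z ⊆ Y ∧ ∀ x ∈ Z, ∀ y ∈ Z, M.xD x = M.xD y → x = y := by
  simp [allocs, Finset.mem_filter, Finset.mem_powerset]

lemma bestAlloc_mem_allocs (M : Market D H X) (pr : Pref X) (Y : Finset X) :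
    bestAlloc M pr Y ∈ allocs M Y :=
  @Finset.max'_mem _ pr _ _

lemma le_bestAlloc (M : Market D H X) (pr : Pref X) (Y Z : Finset X)
    (hZ : Z ∈ allocs M Y) : pr.le Z (bestAlloc M pr Y) :=
  @Finset.le_max' _ pr _ _ hZ

lemma bestAlloc_subset (M : Market D H X) (pr : Pref X) (Y : Finset X) :
    bestAlloc M pr Y ⊆ Y :=
  ((mem_allocs_iff M Y _).mp (bestAlloc_mem_allocs M pr Y)).1

/-- If `x` is in doctor `d`'s choice set from `Y`, then `M.xD x = d` and the choice set
is exactly `{x}`. -/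
lemma Cd_eq_singleton (M : Market D H X) (Pd : Pref X) (d : D) (Y : Finset X)
    (x : X) (hx : x ∈ Cd M Pd d Y) : Cd M Pd d Y = {x} := by
  have hmem := bestAlloc_mem_allocs M Pd (docPart M Y d)
  rw [mem_allocs_iff] at hmem
  apply Finset.eq_singleton_iff_unique_mem.mpr
  refine ⟨hx, fun y hy => ?_⟩
  have hxd : M.xD x = d := (Finset.mem_filter.mp (hmem.1 hx)).2
  have hyd : M.xD y = d := (Finset.mem_filter.mp (hmem.1 hy)).2
  exact hmem.2 y hy x hx (hyd.trans hxd.symm)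

lemma Cd_xD (M : Market D H X) (Pd : Pref X) (d : D) (Y : Finset X)
    (x : X) (hx : x ∈ Cd M Pd d Y) : M.xD x = d := by
  have := bestAlloc_subset M Pd (docPart M Y d) hx
  exact (Finset.mem_filter.mp this).2

/-- Doctor-side "substitutability": if `x` is chosen by doctor `d` from `Y` and remains
available in `Y' ⊆ Y`, it is chosen from `Y'`. -/
lemma Cd_subst (M : Market D H X) (Pd : Pref X) (d : D) (Y Y' : Finset X)
    (hYY : Y' ⊆ Y) (x : X) (hx : x ∈ Cd M Pd d Y) (hx' : x ∈ Y') :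
    x ∈ Cd M Pd d Y' := by
  have hxd : M.xD x = d := Cd_xD M Pd d Y x hx
  have hsing : Cd M Pd d Y = {x} := Cd_eq_singleton M Pd d Y x hx
  have hxmem : ({x} : Finset X) ∈ allocs M (docPart M Y' d) := by
    rw [mem_allocs_iff]
    constructor
    · intro y hy
      rw [Finset.mem_singleton] at hy
      subst hy
      exact Finset.mem_filter.mpr ⟨hx', hxd⟩
    · intro a ha b hb _
      rw [Finset.mem_singleton] at ha hb; rw [ha, hb]
  -- best allocation in Y' is ≥ {x} and ≤ best in Y = {x}
  have h1 : Pd.le {x} (Cd M Pd d Y') := le_bestAlloc M Pd _ _ hxmem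
  have h2 : Pd.le (Cd M Pd d Y') {x} := by
    rw [← hsing]
    apply le_bestAlloc
    have hmem := bestAlloc_mem_allocs M Pd (docPart M Y' d)
    rw [mem_allocs_iff] at hmem ⊢
    refine ⟨fun y hy => ?_, hmem.2⟩
    have := hmem.1 hy
    simp only [docPart, Finset.mem_filter] at this ⊢
    exact ⟨hYY this.1, this.2⟩
  have : Cd M Pd d Y' = {x} := Pd.le_antisymm _ _ h2 h1
  rw [this]; exact Finset.mem_singleton_self x

lemma Ch_subset (M : Market D H X) (h : H) (Y : Finset X) : Ch M h Y ⊆ Y :=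
  fun x hx => (Finset.mem_filter.mp (bestAlloc_subset M (M.prH h) _ hx)).1

/-- Under substitutability, the offers provisionally accepted by a hospital at an
iteration of D-DA are offered again at the next iteration: `C_h(O^{t-1}) ⊆ O^t` for every
iteration `t ≥ 2` (here 0-based, so this reads `C_h(O^t) ⊆ O^{t+1}`). -/
theorem Ch_offers_subset_offers_succ (M : Market D H X) (P : Profile D X)
    (hsub : ∀ h : H, Substitutable M h) :
    ∀ (h : H) (t : ℕ), Ch M h (offers M P t) ⊆ offers M P (t + 1) := by
  intro h t x hx
  -- x is in O^t and in CH(O^t)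
  have hxO : x ∈ offers M P t := Ch_subset M h _ hx
  have hxCH : x ∈ CH M (offers M P t) :=
    Finset.mem_biUnion.mpr ⟨h, Finset.mem_univ h, hx⟩
  -- x ∈ Cd for d = xD x
  obtain ⟨d, -, hxCd⟩ := Finset.mem_biUnion.mp hxO
  have hxXt : x ∈ DDAsets M P t := by
    have := bestAlloc_subset M (P d) _ hxCd
    exact (Finset.mem_filter.mp this).1
  have hxXt1 : x ∈ DDAsets M P (t + 1) := by
    show x ∈ DDAsets M P t \ _
    rw [Finset.mem_sdiff]
    refine ⟨hxXt, fun hc => ?_⟩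
    exact (Finset.mem_sdiff.mp hc).2 hxCH
  have : x ∈ Cd M (P d) d (DDAsets M P (t + 1)) := by
    apply Cd_subst M (P d) d (DDAsets M P t) _ _ x hxCd hxXt1
    intro y hy
    exact (Finset.mem_sdiff.mp hy).1
  exact Finset.mem_biUnion.mpr ⟨d, Finset.mem_univ d, this⟩

end Matching
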